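/- Let X be a real Banach space and A : X ⇉ X* a maximally monotone operator such that for every z ∈ X and every λ > 0 the operator A + λ J_1(· − z) is maximally monotone (i.e., A is Verona regular). Then cl(dom A) = cl(conv(dom A)) = cl(P_X[dom F_A]); in particular dom A is nearly convex (its closure is convex). -/

import Mathlib

open Set

noncomputable section

variable {X : Type*}

/-- The domain of a set-valued operator `A : X ⇉ X*`, identified with its graph. -/
def opDom [NormedAddCommGroup X] [NormedSpace ℝ X]
    (A : Set (X × (X →L[ℝ] ℝ))) : Set X := Prod.fst '' A

/-- The range of a set-valued operator. -/
def opRan [NormedAddCommGroup X] [NormedSpace ℝ X]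
    (A : Set (X × (X →L[ℝ] ℝ))) : Set (X →L[ℝ] ℝ) := Prod.snd '' A

/-- `(x, x*)` is monotonically related to the set `S ⊆ X × X*`:
`⟨x − y, x* − y*⟩ ≥ 0` for all `(y, y*) ∈ S`. -/
def MonRel [NormedAddCommGroup X] [NormedSpace ℝ X]
    (p : X × (X →L[ℝ] ℝ)) (S : Set (X × (X →L[ℝ] ℝ))) : Prop :=
  ∀ q ∈ S, 0 ≤ (p.2 - q.2) (p.1 - q.1)

/-- `A` is a monotone operator (identified with its graph). -/
def IsMonotoneOp [NormedAddCommGroup X] [NormedSpace ℝ X]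
    (A : Set (X × (X →L[ℝ] ℝ))) : Prop :=
  ∀ p ∈ A, MonRel p A

/-- `A` is maximally monotone: it is monotone and every monotonically related
pair already belongs to the graph. -/
def IsMaxMonotoneOp [NormedAddCommGroup X] [NormedSpace ℝ X]
    (A : Set (X × (X →L[ℝ] ℝ))) : Prop :=
  IsMonotoneOp A ∧ ∀ p : X × (X →L[ℝ] ℝ), MonRel p A → p ∈ A

/-- The Fitzpatrick function of `A`, with values in `(-∞, +∞]` (modeled in `EReal`):
`F_A(x, x*) = sup_{(a,a*) ∈ A} (⟨a, x*⟩ + ⟨x, a*⟩ − ⟨a, a*⟩)`. -/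
def fitz [NormedAddCommGroup X] [NormedSpace ℝ X]
    (A : Set (X × (X →L[ℝ] ℝ))) (x : X) (x' : X →L[ℝ] ℝ) : EReal :=
  ⨆ a ∈ A, ((x' a.1 + a.2 x - a.2 a.1 : ℝ) : EReal)

/-- The domain of the Fitzpatrick function: the set of pairs where `F_A < +∞`. -/
def fitzDom [NormedAddCommGroup X] [NormedSpace ℝ X]
    (A : Set (X × (X →L[ℝ] ℝ))) : Set (X × (X →L[ℝ] ℝ)) :=
  {q | fitz A q.1 q.2 < ⊤}

/-- `J_p(x) = (1/p) ∂‖·‖^p (x)`, the subdifferential at `x` of `y ↦ ‖y‖^p / p`. -/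
def Jmap [NormedAddCommGroup X] [NormedSpace ℝ X]
    (p : ℝ) (x : X) : Set (X →L[ℝ] ℝ) :=
  {x' | ∀ y : X, x' (y - x) + ‖x‖ ^ p / p ≤ ‖y‖ ^ p / p}

/-- The graph of the operator `A + λ J_p(· − z)`. -/
def sumGraph [NormedAddCommGroup X] [NormedSpace ℝ X]
    (A : Set (X × (X →L[ℝ] ℝ))) (lam p : ℝ) (z : X) :
    Set (X × (X →L[ℝ] ℝ)) :=
  {q | ∃ a' b' : X →L[ℝ] ℝ, (q.1, a') ∈ A ∧ b' ∈ Jmap p (q.1 - z) ∧ q.2 = a' + lam • b'}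


/-!
The Fitzpatrick function is a supremum of affine functions, so `P_X[dom F_A]` is convex, and
monotonicity puts `dom A` inside it. Conversely, if `F_A(z, x') ≤ M`, maximality of
`A + λ J₁(· − z)` produces `b ∈ dom A` with `λ ‖b − z‖ ≤ M − ⟨z, x'⟩`; letting `λ → ∞` gives
`z ∈ cl(dom A)`.
-/

section

variable [NormedAddCommGroup X] [NormedSpace ℝ X]

lemma fitz_lt_top_iff (A : Set (X × (X →L[ℝ] ℝ))) (x : X) (x' : X →L[ℝ] ℝ) :
    fitz A x x' < ⊤ ↔ ∃ M : ℝ, ∀ a ∈ A, x' a.1 + a.2 x - a.2 a.1 ≤ M := by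
  constructor
  · intro h
    refine ⟨(fitz A x x').toReal, fun a ha => ?_⟩
    have h_le : ((x' a.1 + a.2 x - a.2 a.1 : ℝ) : EReal) ≤ fitz A x x' :=
      le_iSup₂_of_le a ha le_rfl
    exact_mod_cast h_le.trans (EReal.le_coe_toReal h.ne)
  · rintro ⟨M, hM⟩
    exact (iSup₂_le fun a ha => EReal.coe_le_coe_iff.mpr (hM a ha)).trans_lt (EReal.coe_lt_top M)

lemma subset_fitzDom {A : Set (X × (X →L[ℝ] ℝ))} (hA : IsMonotoneOp A) : A ⊆ fitzDom A := by
  intro p hp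
  refine (fitz_lt_top_iff A p.1 p.2).mpr ⟨p.2 p.1, fun a ha => ?_⟩
  have hmon := hA p hp a ha
  simp only [sub_apply, map_sub] at hmon
  linarith

lemma convex_fitzDom (A : Set (X × (X →L[ℝ] ℝ))) : Convex ℝ (fitzDom A) := by
  rintro ⟨y₁, y₁'⟩ h₁ ⟨y₂, y₂'⟩ h₂ s t hs ht hst
  obtain ⟨M₁, hM₁⟩ := (fitz_lt_top_iff A _ _).mp h₁
  obtain ⟨M₂, hM₂⟩ := (fitz_lt_top_iff A _ _).mp h₂
  refine (fitz_lt_top_iff A _ _).mpr ⟨s * M₁ + t * M₂, fun a ha => ?_⟩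
  have h₁ := mul_le_mul_of_nonneg_left (hM₁ a ha) hs
  have h₂ := mul_le_mul_of_nonneg_left (hM₂ a ha) ht
  have hsplit : a.2 a.1 = s * a.2 a.1 + t * a.2 a.1 := by rw [← add_mul, hst, one_mul]
  simp only [Prod.smul_mk, Prod.mk_add_mk, add_apply, smul_apply, map_add, map_smul, smul_eq_mul]
  linarith

lemma convex_fst_image_fitzDom (A : Set (X × (X →L[ℝ] ℝ))) :
    Convex ℝ (Prod.fst '' fitzDom A) :=
  (convex_fitzDom A).linear_image (LinearMap.fst ℝ X (X →L[ℝ] ℝ))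

lemma norm_le_apply_of_mem_Jmap_one {x : X} {x' : X →L[ℝ] ℝ} (hx' : x' ∈ Jmap 1 x) :
    ‖x‖ ≤ x' x := by
  have h := hx' 0
  simp only [zero_sub, map_neg, Real.rpow_one, norm_zero, div_one] at h
  linarith

/-- Either `(z, x')` lies in the graph of `A + λ J₁(· − z)` (take `b = z`), or a pair
`(b, a' + λ u')` violating monotonicity gives `λ ‖b − z‖ < ⟨b − z, x'⟩ + ⟨z − b, a'⟩ ≤ M − ⟨z, x'⟩`. -/
lemma exists_mem_opDom_mul_norm_sub_le {A : Set (X × (X →L[ℝ] ℝ))} {z : X} {x' : X →L[ℝ] ℝ}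
    {M : ℝ} (hM : ∀ a ∈ A, x' a.1 + a.2 z - a.2 a.1 ≤ M) {lam : ℝ} (hlam : 0 ≤ lam)
    (hmax : IsMaxMonotoneOp (sumGraph A lam 1 z)) :
    ∃ b ∈ opDom A, lam * ‖b - z‖ ≤ M - x' z := by
  by_cases hrel : MonRel (z, x') (sumGraph A lam 1 z)
  · obtain ⟨a', -, ha', -, -⟩ := hmax.2 _ hrel
    have hfitz := hM _ ha'
    refine ⟨z, ⟨_, ha', rfl⟩, ?_⟩
    simp only [sub_self, norm_zero, mul_zero, add_sub_cancel_right] at hfitz ⊢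
    linarith
  · simp only [MonRel, not_forall, not_le] at hrel
    obtain ⟨⟨b, _⟩, ⟨a', u', ha', hu', rfl⟩, hneg⟩ := hrel
    have hJ := mul_le_mul_of_nonneg_left (norm_le_apply_of_mem_Jmap_one hu') hlam
    have hfitz := hM _ ha'
    refine ⟨b, ⟨_, ha', rfl⟩, ?_⟩
    simp only [sub_apply, add_apply, smul_apply, smul_eq_mul, map_sub] at hneg hJ hfitz
    linarith

lemma fst_fitzDom_subset_closure_opDom {A : Set (X × (X →L[ℝ] ℝ))}
    (hver : ∀ z : X, ∀ lam : ℝ, 0 < lam → IsMaxMonotoneOp (sumGraph A lam 1 z)) :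
    Prod.fst '' fitzDom A ⊆ closure (opDom A) := by
  rintro z ⟨⟨z, x'⟩, hfitz, rfl⟩
  obtain ⟨M, hM⟩ := (fitz_lt_top_iff A z x').mp hfitz
  rw [Metric.mem_closure_iff]
  intro ε hε
  set C := |M - x' z| + 1
  have hlam : 0 < C / ε := by positivity
  obtain ⟨b, hb, hdist⟩ := exists_mem_opDom_mul_norm_sub_le hM hlam.le (hver z _ hlam)
  refine ⟨b, hb, ?_⟩
  rw [dist_comm, dist_eq_norm]
  have hCε : C / ε * ‖b - z‖ < C / ε * ε := by
    rw [div_mul_cancel₀ _ hε.ne']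
    linarith [le_abs_self (M - x' z)]
  exact lt_of_mul_lt_mul_left hCε hlam.le

end

theorem nearly_convex_of_veronaRegular_general
    [NormedAddCommGroup X] [NormedSpace ℝ X]
    (A : Set (X × (X →L[ℝ] ℝ))) (hA : IsMaxMonotoneOp A)
    (hver : ∀ z : X, ∀ lam : ℝ, 0 < lam → IsMaxMonotoneOp (sumGraph A lam 1 z)) :
    closure (opDom A) = closure (convexHull ℝ (opDom A)) ∧
    closure (opDom A) = closure (Prod.fst '' fitzDom A) ∧
    Convex ℝ (closure (opDom A)) := by
  have hsub : opDom A ⊆ Prod.fst '' fitzDom A := image_mono (subset_fitzDom hA.1)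
  have hconv := convex_fst_image_fitzDom A
  have hclosure : closure (opDom A) = closure (Prod.fst '' fitzDom A) :=
    (closure_mono hsub).antisymm
      (closure_minimal (fst_fitzDom_subset_closure_opDom hver) isClosed_closure)
  refine ⟨?_, hclosure, hclosure ▸ hconv.closure⟩
  refine (closure_mono (subset_convexHull ℝ _)).antisymm ?_
  exact hclosure ▸ closure_mono (convexHull_min hsub hconv)

/-- Corollary: if `A` is maximally monotone and Verona regular, i.e. `A + λ J_1(· − z)`
is maximally monotone for every `z ∈ X` and `λ > 0`, then
`cl(dom A) = cl(conv(dom A)) = cl(P_X[dom F_A])`; in particular `dom A` is nearly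
convex. -/
theorem nearly_convex_of_veronaRegular
    [NormedAddCommGroup X] [NormedSpace ℝ X] [CompleteSpace X]
    (A : Set (X × (X →L[ℝ] ℝ))) (hA : IsMaxMonotoneOp A)
    (hver : ∀ z : X, ∀ lam : ℝ, 0 < lam → IsMaxMonotoneOp (sumGraph A lam 1 z)) :
    closure (opDom A) = closure (convexHull ℝ (opDom A)) ∧
    closure (opDom A) = closure (Prod.fst '' fitzDom A) ∧
    Convex ℝ (closure (opDom A)) :=
  nearly_convex_of_veronaRegular_general A hA hver
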